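/- Let k ≥ 1 with r_n(k) = n, and suppose r̂_k ∈ ℂ^N satisfies p_j^H r̂_k = 0 for all 1 ≤ j ≤ k. Then for any complex parameters ω_1, …, ω_{g_n(k)}, the ML(n)BiCGStab auxiliary vector u_k := φ_{g_n(k)}(A) r̂_k satisfies q_i^H u_k = 0 for all 1 ≤ i ≤ n, i.e. u_k ⟂ span{q_1, …, q_n}. -/

import Mathlib

/-!
Write `k = n (g + 1)` with `g = g_n(k)`. For `m ≤ g` and `1 ≤ i ≤ n` the index `j = m n + i` lies in
`[1, k]` and has `g_n(j) = m`, `r_n(j) = i`, so `p_j = (Aᴴ)^m q_i` and the hypothesis on `r̂_k` reads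
`q_iᴴ A^m r̂_k = 0`. Thus `q_i` is orthogonal to the Krylov vectors `A^m r̂_k`, `m ≤ g`, and hence to
`ψ(A) r̂_k` for every polynomial `ψ` of degree at most `g`, in particular to `φ_g(A) r̂_k`.
-/

open Matrix Polynomial

/-- The index function `g_n(k) = ⌊(k-1)/n⌋`, rounding toward minus infinity. -/
def gIdx (n k : ℤ) : ℤ := Int.fdiv (k - 1) n

/-- The index function `r_n(k) = k - n * g_n(k)`. -/
def rIdx (n k : ℤ) : ℤ := k - n * gIdx n k

section Indices

variable {n : ℤ}

lemma gIdx_mul_add (hn : 0 < n) (m : ℤ) {i : ℤ} (hi1 : 1 ≤ i) (hin : i ≤ n) :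
    gIdx n (m * n + i) = m := by
  rw [gIdx, Int.fdiv_eq_ediv_of_nonneg _ hn.le, show m * n + i - 1 = (i - 1) + m * n by ring,
    Int.add_mul_ediv_right _ _ hn.ne', Int.ediv_eq_zero_of_lt (by omega) (by omega), zero_add]

lemma rIdx_mul_add (hn : 0 < n) (m : ℤ) {i : ℤ} (hi1 : 1 ≤ i) (hin : i ≤ n) :
    rIdx n (m * n + i) = i := by
  rw [rIdx, gIdx_mul_add hn m hi1 hin]
  ring

lemma gIdx_nonneg (hn : 0 < n) {k : ℤ} (hk : 1 ≤ k) : 0 ≤ gIdx n k :=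
  Int.fdiv_nonneg (by omega) hn.le

end Indices

lemma natDegree_le_of_linear_factor_recursion {R : Type*} [CommRing R] {ω : ℕ → R}
    {φ : ℕ → R[X]} (hφ0 : φ 0 = 1) (hφ : ∀ m : ℕ, φ (m + 1) = (1 - C (ω (m + 1)) * X) * φ m)
    (m : ℕ) : (φ m).natDegree ≤ m := by
  induction m with
  | zero => simp [hφ0]
  | succ m ih =>
    have hfactor : (1 - C (ω (m + 1)) * X).natDegree ≤ 1 := by
      rw [sub_eq_neg_add, ← neg_mul, ← C_neg, ← C_1]
      exact natDegree_linear_le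
    rw [hφ]
    exact (natDegree_mul_le_of_le hfactor ih).trans_eq (add_comm 1 m)

lemma dotProduct_aeval_mulVec_eq_zero {R ι : Type*} [CommSemiring R] [Fintype ι] [DecidableEq ι]
    {A : Matrix ι ι R} {w v : ι → R} {d : ℕ} (hkrylov : ∀ m ≤ d, w ⬝ᵥ (A ^ m *ᵥ v) = 0)
    {ψ : R[X]} (hψ : ψ.natDegree ≤ d) : w ⬝ᵥ (aeval A ψ *ᵥ v) = 0 := by
  rw [aeval_eq_sum_range' (Nat.lt_succ_of_le hψ), sum_mulVec, dotProduct_sum]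
  refine Finset.sum_eq_zero fun m hm => ?_
  rw [smul_mulVec, dotProduct_smul, hkrylov m (Nat.lt_succ_iff.mp (Finset.mem_range.mp hm)),
    smul_zero]

lemma star_conjTranspose_pow_mulVec_dotProduct {α ι : Type*} [CommRing α] [StarRing α] [Fintype ι]
    [DecidableEq ι] (A : Matrix ι ι α) (m : ℕ) (w v : ι → α) :
    star (Aᴴ ^ m *ᵥ w) ⬝ᵥ v = star w ⬝ᵥ (A ^ m *ᵥ v) := by
  rw [star_mulVec, ← conjTranspose_pow, conjTranspose_conjTranspose, dotProduct_mulVec]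

/-- Let `k ≥ 1` with `r_n(k) = n`, and suppose `r̂_k` satisfies `p_jᴴ r̂_k = 0` for all
`1 ≤ j ≤ k`, where `p_j = (Aᴴ)^{g_n(j)} q_{r_n(j)}`.  Then for any parameters
`ω_1, …, ω_{g_n(k)}`, the ML(n)BiCGStab auxiliary vector `u_k := φ_{g_n(k)}(A) r̂_k`
satisfies `q_iᴴ u_k = 0` for all `1 ≤ i ≤ n`, where `φ_0 = 1` and
`φ_m(λ) = (1 − ω_m λ) φ_{m−1}(λ)`. -/
theorem stmt_12 {N : ℕ} (A : Matrix (Fin N) (Fin N) ℂ) (n : ℤ) (hn : 0 < n)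
    (q : ℤ → (Fin N → ℂ)) (p : ℤ → (Fin N → ℂ))
    (hp : ∀ k : ℤ, 1 ≤ k → p k = (Aᴴ ^ (gIdx n k).toNat) *ᵥ q (rIdx n k))
    (ω : ℕ → ℂ) (φ : ℕ → Polynomial ℂ)
    (hφ0 : φ 0 = 1)
    (hφ : ∀ m : ℕ, φ (m + 1) = (1 - C (ω (m + 1)) * X) * φ m)
    (k : ℤ) (hk : 1 ≤ k) (hkn : rIdx n k = n)
    (rhat : Fin N → ℂ)
    (hv : ∀ j : ℤ, 1 ≤ j → j ≤ k → star (p j) ⬝ᵥ rhat = 0) :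
    ∀ i : ℤ, 1 ≤ i → i ≤ n →
      star (q i) ⬝ᵥ ((aeval A (φ (gIdx n k).toNat)) *ᵥ rhat) = 0 := by
  intro i hi1 hin
  have hg := gIdx_nonneg hn hk
  have hk_eq : k = n * gIdx n k + n := by rw [rIdx] at hkn; omega
  refine dotProduct_aeval_mulVec_eq_zero (fun m hm => ?_)
    (natDegree_le_of_linear_factor_recursion hφ0 hφ _)
  have hmg : (m : ℤ) ≤ gIdx n k := by omega
  have hj1 : 1 ≤ (m : ℤ) * n + i := by nlinarith
  have hjk : (m : ℤ) * n + i ≤ k := by nlinarith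
  have hpj := hv _ hj1 hjk
  rwa [hp _ hj1, gIdx_mul_add hn _ hi1 hin, rIdx_mul_add hn _ hi1 hin, Int.toNat_natCast,
    star_conjTranspose_pow_mulVec_dotProduct] at hpj
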